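/- arXiv:1912.06639 — 3 statements merged into one kernel-verified Lean document; each statement's English description precedes it below -/
import Mathlib

section
/- For every finite subgraph G = (V, E) of (Z^d, E^d) there exists a subset E₀ ⊆ E with |E₀| ≤ 4^(d+1) d² |V|^((d-1)/d) such that every connected component of the graph (V, E \ E₀) contains at most ⌈|V|/2⌉ vertices. -/
/-!
Cut `ℤ^d` into the cubes `o + r·(c + [0,1)^d)` of side `r` with `r^d ≤ ⌈|V|/2⌉` and
`|V| ≤ (4r)^d`, and remove the edges of `E` joining two different cubes. The remaining components
lie in single cubes, so they have at most `r^d ≤ ⌈|V|/2⌉` vertices. A unit edge joins two cubes for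
exactly one residue of the offset `o` modulo `r` in its direction, i.e. for a `1/r` fraction of the
offsets `o ∈ [0,r)^d`; averaging, some offset cuts at most `|E|/r ≤ d|V|/r ≤ 4d|V|^((d-1)/d)` edges.
-/

open Finset

/-- The nearest-neighbour graph on `ℤ^d`. -/
def latticeGraph (d : ℕ) : SimpleGraph (Fin d → ℤ) :=
  SimpleGraph.fromRel (fun x y => (∑ i, |x i - y i|) = 1)

section Cells

variable {ι : Type*} [DecidableEq ι]

/-- Since `/` on `ℤ` rounds down when `r > 0`, this indexes the cubes `o + r • (c + [0,1)^ι)`. -/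
def cell (r : ℕ) (o v : ι → ℤ) : ι → ℤ := fun i => (v i - o i) / r

variable (ι) in
noncomputable def offsets [Fintype ι] (r : ℕ) : Finset (ι → ℤ) :=
  Fintype.piFinset fun _ => Ico 0 (r : ℤ)

lemma card_offsets [Fintype ι] (r : ℕ) : #(offsets ι r) = r ^ Fintype.card ι := by
  simp [offsets, Fintype.card_piFinset, Int.card_Ico]

lemma card_filter_cell_eq_le [Fintype ι] {r : ℕ} (hr : 0 < r) (o c : ι → ℤ) (V : Finset (ι → ℤ)) :
    #{v ∈ V | cell r o v = c} ≤ r ^ Fintype.card ι := by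
  calc #{v ∈ V | cell r o v = c}
      ≤ #(Fintype.piFinset fun i => Ico (c i * r + o i) (c i * r + o i + r)) := by
        refine card_le_card fun v hv => Fintype.mem_piFinset.2 fun i => ?_
        have := (Int.ediv_eq_iff_of_pos (by exact_mod_cast hr)).1 (congrFun (mem_filter.1 hv).2 i)
        rw [mem_Ico]
        constructor <;> linarith [this.1, this.2]
    _ = r ^ Fintype.card ι := by simp [Fintype.card_piFinset, Int.card_Ico]

lemma modEq_of_cell_add_single_ne {r : ℕ} (hr : 0 < r) {o v : ι → ℤ} {j : ι}
    (h : cell r o (v + Pi.single j 1) ≠ cell r o v) : o j ≡ v j + 1 [ZMOD r] := by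
  have hj : (v j + 1 - o j) / r ≠ (v j - o j) / r := by
    contrapose! h
    funext i
    rcases eq_or_ne i j with rfl | hij
    · simpa [cell] using h
    · simp [cell, hij]
  have hr' : (0 : ℤ) < r := by exact_mod_cast hr
  obtain ⟨hle, hlt⟩ := (Int.ediv_eq_iff_of_pos hr').1 (rfl : (v j - o j) / r = _)
  rcases (show v j + 1 - o j ≤ (v j - o j) / r * r + r by linarith).lt_or_eq with hlt' | heq
  · exact absurd ((Int.ediv_eq_iff_of_pos hr').2 ⟨by linarith, hlt'⟩) hj
  · exact Int.modEq_iff_dvd.2 ⟨(v j - o j) / r + 1, by linarith⟩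

lemma card_filter_cell_add_single_ne_mul_le [Fintype ι] {r : ℕ} (hr : 0 < r) (v : ι → ℤ) (j : ι) :
    #{o ∈ offsets ι r | cell r o (v + Pi.single j 1) ≠ cell r o v} * r ≤
      r ^ Fintype.card ι := by
  have hr' : (0 : ℤ) < r := by exact_mod_cast hr
  have hsub : {o ∈ offsets ι r | cell r o (v + Pi.single j 1) ≠ cell r o v} ⊆
      {o ∈ offsets ι r | o j = (v j + 1) % r} := by
    intro o ho
    simp only [offsets, mem_filter, Fintype.mem_piFinset, mem_Ico] at ho ⊢
    have hmod := modEq_of_cell_add_single_ne hr ho.2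
    rw [Int.ModEq, Int.emod_eq_of_lt (ho.1 j).1 (ho.1 j).2] at hmod
    exact ⟨ho.1, hmod⟩
  have hres : (v j + 1) % r ∈ Ico 0 (r : ℤ) :=
    mem_Ico.2 ⟨Int.emod_nonneg _ hr'.ne', Int.emod_lt_of_pos _ hr'⟩
  have hcard : Fintype.card ι - 1 + 1 = Fintype.card ι :=
    Nat.sub_add_cancel (Fintype.card_pos_iff.2 ⟨j⟩)
  calc _ ≤ #{o ∈ offsets ι r | o j = (v j + 1) % r} * r :=
        Nat.mul_le_mul_right _ (card_le_card hsub)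
    _ = r ^ Fintype.card ι := by
        rw [offsets, Fintype.card_filter_piFinset_const, if_pos hres, Int.card_Ico, sub_zero,
          Int.toNat_natCast, ← pow_succ, hcard]

end Cells

lemma eq_of_reachable_fromEdgeSet {α β : Type*} {f : α → β} {s : Set (Sym2 α)}
    (hs : ∀ e ∈ s, (e.map f).IsDiag) {x y : α} (h : (SimpleGraph.fromEdgeSet s).Reachable x y) :
    f x = f y := by
  obtain ⟨w⟩ := h
  induction w with
  | nil => rfl
  | cons hadj _ ih =>
    have := hs _ ((SimpleGraph.fromEdgeSet_adj _).1 hadj).1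
    rw [Sym2.map_mk, Sym2.mk_isDiag_iff] at this
    exact this.trans ih

lemma ncard_reachable_le_card_filter_eq {α β : Type*} [DecidableEq β] {f : α → β}
    {s : Set (Sym2 α)} (hs : ∀ e ∈ s, (e.map f).IsDiag) (V : Finset α) (x : α) :
    {y | y ∈ V ∧ (SimpleGraph.fromEdgeSet s).Reachable x y}.ncard ≤ #{v ∈ V | f v = f x} := by
  have hsub : {y | y ∈ V ∧ (SimpleGraph.fromEdgeSet s).Reachable x y} ⊆ ↑{v ∈ V | f v = f x} :=
    fun y ⟨hy, hxy⟩ => mem_filter.2 ⟨hy, (eq_of_reachable_fromEdgeSet hs hxy).symm⟩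
  exact (Set.ncard_le_ncard hsub (finite_toSet _)).trans_eq (Set.ncard_coe_finset _)

section Lattice

variable {d : ℕ}

lemma exists_eq_single_of_sum_abs_eq_one {ι : Type*} [Fintype ι] [DecidableEq ι] {g : ι → ℤ}
    (h : ∑ i, |g i| = 1) : ∃ j, g = Pi.single j 1 ∨ g = -Pi.single j 1 := by
  obtain ⟨j, hj⟩ : ∃ j, g j ≠ 0 := by
    by_contra! hg
    simp [hg] at h
  have hsplit := add_sum_erase univ (fun i => |g i|) (mem_univ j)
  have hrest : ∀ i ∈ univ.erase j, |g i| ≤ ∑ i ∈ univ.erase j, |g i| :=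
    fun i hi => single_le_sum (fun i _ => abs_nonneg (g i)) hi
  have hgj : |g j| = 1 := by
    linarith [abs_pos.2 hj, sum_nonneg fun i (_ : i ∈ univ.erase j) => abs_nonneg (g i)]
  have hg : g = Pi.single j (g j) := by
    funext i
    rcases eq_or_ne i j with rfl | hij
    · simp
    · have := hrest i (mem_erase.2 ⟨hij, mem_univ i⟩)
      simp only [Pi.single_apply, hij, if_false]
      exact abs_nonpos_iff.1 (by linarith)
  rcases abs_eq_abs.1 (hgj.trans abs_one.symm) with h1 | h1
  · exact ⟨j, Or.inl (by rwa [h1] at hg)⟩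
  · exact ⟨j, Or.inr (by rw [hg, h1, Pi.single_neg])⟩

lemma exists_eq_add_single_of_adj {x y : Fin d → ℤ} (h : (latticeGraph d).Adj x y) :
    ∃ j, y = x + Pi.single j 1 ∨ x = y + Pi.single j 1 := by
  obtain ⟨-, h⟩ := (SimpleGraph.fromRel_adj _ _ _).1 h
  have hsum : ∑ i, |(y - x) i| = 1 := by
    rcases h with h | h
    · rw [← h]
      exact sum_congr rfl fun i _ => abs_sub_comm _ _
    · simpa only [Pi.sub_apply] using h
  obtain ⟨j, hj | hj⟩ := exists_eq_single_of_sum_abs_eq_one hsum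
  · exact ⟨j, Or.inl (eq_add_of_sub_eq' hj)⟩
  · exact ⟨j, Or.inr (by linear_combination -hj)⟩

lemma exists_eq_mk_add_single {e : Sym2 (Fin d → ℤ)} (he : e ∈ (latticeGraph d).edgeSet) :
    ∃ v j, e = s(v, v + Pi.single j 1) := by
  induction e using Sym2.inductionOn with
  | hf x y =>
    obtain ⟨j, rfl | rfl⟩ := exists_eq_add_single_of_adj (SimpleGraph.mem_edgeSet _ |>.1 he)
    · exact ⟨x, j, rfl⟩
    · exact ⟨y, j, Sym2.eq_swap⟩

lemma card_le_card_mul_of_subset_edgeSet {V : Finset (Fin d → ℤ)} {E : Finset (Sym2 (Fin d → ℤ))}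
    (hE : ∀ e ∈ E, e ∈ (latticeGraph d).edgeSet) (hEV : ∀ e ∈ E, ∀ v ∈ e, v ∈ V) :
    #E ≤ #V * d := by
  have hsub : E ⊆ (V ×ˢ univ).image
      fun p : (Fin d → ℤ) × Fin d => s(p.1, p.1 + Pi.single p.2 1) := by
    intro e he
    obtain ⟨v, j, rfl⟩ := exists_eq_mk_add_single (hE _ he)
    exact mem_image.2 ⟨(v, j), mem_product.2 ⟨hEV _ he v (Sym2.mem_mk_left _ _), mem_univ j⟩, rfl⟩
  calc #E ≤ #(V ×ˢ (univ : Finset (Fin d))) := (card_le_card hsub).trans card_image_le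
    _ = #V * d := by rw [card_product, card_univ, Fintype.card_fin]

lemma exists_offset_card_cut_mul_le {r : ℕ} (hr : 0 < r) {E : Finset (Sym2 (Fin d → ℤ))}
    (hE : ∀ e ∈ E, e ∈ (latticeGraph d).edgeSet) :
    ∃ o ∈ offsets (Fin d) r, #{e ∈ E | ¬(e.map (cell r o)).IsDiag} * r ≤ #E := by
  have hcount : ∀ e ∈ E, #{o ∈ offsets (Fin d) r | ¬(e.map (cell r o)).IsDiag} * r ≤ r ^ d := by
    intro e he
    obtain ⟨v, j, rfl⟩ := exists_eq_mk_add_single (hE e he)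
    simpa only [Sym2.map_mk, Sym2.mk_isDiag_iff, ne_comm, Fintype.card_fin] using
      card_filter_cell_add_single_ne_mul_le hr v j
  refine exists_le_of_sum_le ⟨0, by simp [offsets, hr]⟩ ?_
  calc ∑ o ∈ offsets (Fin d) r, #{e ∈ E | ¬(e.map (cell r o)).IsDiag} * r
      = ∑ e ∈ E, #{o ∈ offsets (Fin d) r | ¬(e.map (cell r o)).IsDiag} * r := by
        simp only [← sum_mul, card_filter]
        rw [sum_comm]
    _ ≤ ∑ _e ∈ E, r ^ d := sum_le_sum hcount
    _ = ∑ _o ∈ offsets (Fin d) r, #E := by simp [card_offsets, mul_comm]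

end Lattice

lemma exists_pos_pow_le_half_and_le_four_mul_pow {d n : ℕ} (hd : d ≠ 0) (hn : 0 < n) :
    ∃ r, 0 < r ∧ r ^ d ≤ (n + 1) / 2 ∧ n ≤ (4 * r) ^ d := by
  set r := Nat.nthRoot d ((n + 1) / 2)
  have hr : 0 < r :=
    (Nat.le_nthRoot_iff hd).2 (by simp only [Nat.succ_eq_add_one, zero_add, one_pow]; omega)
  refine ⟨r, hr, Nat.pow_nthRoot_le_iff.2 (Or.inl hd), ?_⟩
  have hlt : (n + 1) / 2 < (r + 1) ^ d := Nat.lt_pow_nthRoot_add_one hd _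
  calc n ≤ 2 * (r + 1) ^ d := by omega
    _ ≤ 2 ^ d * (r + 1) ^ d := Nat.mul_le_mul_right _ (Nat.le_self_pow hd 2)
    _ = (2 * (r + 1)) ^ d := (mul_pow ..).symm
    _ ≤ (4 * r) ^ d := Nat.pow_le_pow_left (by omega) d

lemma le_mul_rpow_of_le_pow {d : ℕ} (hd : d ≠ 0) {x y : ℝ} (hx : 0 ≤ x) (hy : 0 ≤ y)
    (h : x ≤ y ^ d) : x ≤ y * x ^ (((d : ℝ) - 1) / d) := by
  have hexp : ((d : ℝ) - 1) / d + (d : ℝ)⁻¹ = 1 := by field_simp; ring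
  have hroot : x ^ (d : ℝ)⁻¹ ≤ y :=
    (Real.rpow_le_rpow hx h (by positivity)).trans_eq (Real.pow_rpow_inv_natCast hy hd)
  calc x = x ^ (((d : ℝ) - 1) / d + (d : ℝ)⁻¹) := by rw [hexp, Real.rpow_one]
    _ = x ^ (((d : ℝ) - 1) / d) * x ^ (d : ℝ)⁻¹ := Real.rpow_add' hx (by rw [hexp]; norm_num)
    _ ≤ x ^ (((d : ℝ) - 1) / d) * y := by gcongr
    _ = y * x ^ (((d : ℝ) - 1) / d) := mul_comm _ _

/-- The butcher's lemma: for every finite subgraph `(V, E)` of `(ℤ^d, 𝔼^d)` there is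
`E₀ ⊆ E` with `|E₀| ≤ 4^(d+1) d² |V|^((d-1)/d)` such that every connected component of
`(V, E \ E₀)` contains at most `⌈|V|/2⌉` vertices. -/
theorem butcher (d : ℕ) (hd : 2 ≤ d)
    (V : Finset (Fin d → ℤ)) (E : Finset (Sym2 (Fin d → ℤ)))
    (hE : ∀ e ∈ E, e ∈ (latticeGraph d).edgeSet)
    (hEV : ∀ e ∈ E, ∀ v ∈ e, v ∈ V) :
    ∃ E₀ ⊆ E,
      (E₀.card : ℝ) ≤ 4 ^ (d + 1) * d ^ 2 * (V.card : ℝ) ^ (((d : ℝ) - 1) / d) ∧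
      ∀ x ∈ V,
        {y | y ∈ V ∧ (SimpleGraph.fromEdgeSet
          ((E \ E₀ : Finset (Sym2 (Fin d → ℤ))) : Set (Sym2 (Fin d → ℤ)))).Reachable x y}.ncard
          ≤ (V.card + 1) / 2 := by
  rcases V.eq_empty_or_nonempty with rfl | hV
  · exact ⟨∅, empty_subset _, by simp only [card_empty, Nat.cast_zero]; positivity, by simp⟩
  have hd0 : d ≠ 0 := by omega
  obtain ⟨r, hr, hrV, hVr⟩ := exists_pos_pow_le_half_and_le_four_mul_pow hd0 hV.card_pos
  obtain ⟨o, -, ho⟩ := exists_offset_card_cut_mul_le hr hE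
  refine ⟨{e ∈ E | ¬(e.map (cell r o)).IsDiag}, filter_subset _ _, ?_, fun x _ => ?_⟩
  · set N := (#V : ℝ) ^ (((d : ℝ) - 1) / d)
    have hcut : (#{e ∈ E | ¬(e.map (cell r o)).IsDiag} : ℝ) * r ≤ 4 * d * N * r := calc
      _ ≤ (#E : ℝ) := by exact_mod_cast ho
      _ ≤ #V * d := by exact_mod_cast card_le_card_mul_of_subset_edgeSet hE hEV
      _ ≤ 4 * r * N * d := by
        gcongr
        exact le_mul_rpow_of_le_pow hd0 (by positivity) (by positivity) (by exact_mod_cast hVr)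
      _ = 4 * d * N * r := by ring
    calc _ ≤ 4 * d * N := le_of_mul_le_mul_right hcut (by exact_mod_cast hr)
      _ ≤ 4 ^ (d + 1) * d ^ 2 * N := by
        gcongr
        · exact le_self_pow₀ (by norm_num) (by omega)
        · exact le_self_pow₀ (by exact_mod_cast hd0.bot_lt) two_ne_zero
  · have hdiag : ∀ e ∈ ((E \ {e ∈ E | ¬(e.map (cell r o)).IsDiag} : Finset _) :
        Set (Sym2 (Fin d → ℤ))), (e.map (cell r o)).IsDiag := fun e he =>
      not_not.1 fun h => (mem_sdiff.1 he).2 (mem_filter.2 ⟨(mem_sdiff.1 he).1, h⟩)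
    calc _ ≤ #{v ∈ V | cell r o v = cell r o x} := ncard_reachable_le_card_filter_eq hdiag V x
      _ ≤ r ^ d := by simpa using card_filter_cell_eq_le hr o (cell r o x) V
      _ ≤ (#V + 1) / 2 := hrV
end

section
/- Fix an integer k ≥ 0 and a real number A ≥ 4. For any subgraph G = (V, E) of (Z^d, E^d) with |V| ≤ A^d and diam V ≤ (3/2)^k (A − 1), there exists a subset E₀ ⊆ E with |E₀| ≤ 2A^(d−1) + 36 d² (1 − (2/3)^k) A^(d−1) such that every connected component of (V, E \ E₀) contains at most ⌈A^d / 2⌉ vertices. -/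
def unitv (d : ℕ) (j : Fin d) : Fin d → ℤ := fun i => if i = j then 1 else 0

lemma sum_abs_one {d : ℕ} {x y : Fin d → ℤ} (h : (∑ i, |x i - y i|) = 1) :
    ∃ j, |x j - y j| = 1 ∧ ∀ i, i ≠ j → x i = y i := by
  classical
  have hnn : ∀ i ∈ Finset.univ, 0 ≤ |x i - y i| := fun i _ => abs_nonneg _
  have hex : ∃ j, |x j - y j| ≠ 0 := by
    by_contra hc
    push_neg at hc
    have : (∑ i, |x i - y i|) = 0 := Finset.sum_eq_zero (fun i _ => hc i)
    omega
  obtain ⟨j, hj⟩ := hex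
  have hle : |x j - y j| ≤ 1 := by
    have h2 : |x j - y j| ≤ ∑ i, |x i - y i| :=
      Finset.single_le_sum hnn (Finset.mem_univ j)
    omega
  have hj1 : |x j - y j| = 1 := by
    have := abs_nonneg (x j - y j); omega
  refine ⟨j, hj1, fun i hi => ?_⟩
  have hsplit : |x j - y j| + (∑ i ∈ Finset.univ.erase j, |x i - y i|) = ∑ i, |x i - y i| :=
    Finset.add_sum_erase Finset.univ (fun i => |x i - y i|) (Finset.mem_univ j)
  have hrest : (∑ i ∈ Finset.univ.erase j, |x i - y i|) = 0 := by omega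
  have h0 : |x i - y i| = 0 :=
    Finset.sum_eq_zero_iff_of_nonneg (fun i _ => abs_nonneg (x i - y i)) |>.1 hrest i
      (Finset.mem_erase.2 ⟨hi, Finset.mem_univ i⟩)
  have := abs_eq_zero.1 h0; omega

lemma lattice_edge {d : ℕ} {e : Sym2 (Fin d → ℤ)} (he : e ∈ (latticeGraph d).edgeSet) :
    ∃ x j, e = s(x, x + unitv d j) := by
  induction e using Sym2.ind with
  | _ a b =>
    rw [SimpleGraph.mem_edgeSet, latticeGraph, SimpleGraph.fromRel_adj] at he
    obtain ⟨hne, habs⟩ := he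
    have hsum : (∑ i, |a i - b i|) = 1 := by
      rcases habs with h | h
      · exact h
      · rw [show (∑ i, |a i - b i|) = ∑ i, |b i - a i| from
          Finset.sum_congr rfl (fun i _ => abs_sub_comm _ _)]
        exact h
    obtain ⟨j, hj, hrest⟩ := sum_abs_one hsum
    rcases (abs_eq (by norm_num : (0:ℤ) ≤ 1)).1 hj with h1 | h1
    · refine ⟨b, j, ?_⟩
      have hab : a = b + unitv d j := by
        funext i
        by_cases hij : i = j
        · subst hij; simp [unitv]; omega
        · simp only [Pi.add_apply, unitv, if_neg hij, add_zero]; exact (hrest i hij)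
      rw [Sym2.eq_swap, hab]
    · refine ⟨a, j, ?_⟩
      have hab : b = a + unitv d j := by
        funext i
        by_cases hij : i = j
        · subst hij; simp [unitv]; omega
        · simp only [Pi.add_apply, unitv, if_neg hij, add_zero]; exact (hrest i hij).symm
      rw [hab]


/-- cell label of a vertex w.r.t. thresholds t -/
def cellLe {d : ℕ} (t : Fin d → ℤ) (x : Fin d → ℤ) : Fin d → Bool := fun i => decide (x i ≤ t i)

def sameCell {d : ℕ} (t : Fin d → ℤ) (e : Sym2 (Fin d → ℤ)) : Prop :=
  ∀ a ∈ e, ∀ b ∈ e, cellLe t a = cellLe t b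

noncomputable instance {d : ℕ} (t : Fin d → ℤ) : DecidablePred (sameCell t) :=
  fun _ => Classical.dec _

noncomputable def cutE {d : ℕ} (t : Fin d → ℤ) (E : Finset (Sym2 (Fin d → ℤ))) :
    Finset (Sym2 (Fin d → ℤ)) :=
  E.filter (fun e => ¬ sameCell t e)

lemma cellLe_step {d : ℕ} (t : Fin d → ℤ) (x : Fin d → ℤ) (j : Fin d) (h : x j ≠ t j) :
    cellLe t x = cellLe t (x + unitv d j) := by
  funext i
  by_cases hij : i = j
  · subst hij
    simp only [cellLe, Pi.add_apply, unitv, if_pos rfl]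
    have : (x i ≤ t i) ↔ (x i + 1 ≤ t i) := by omega
    simp [this]
  · simp [cellLe, Pi.add_apply, unitv, if_neg hij]

lemma cutE_subset {d : ℕ} (t : Fin d → ℤ) (E : Finset (Sym2 (Fin d → ℤ))) :
    cutE t E ⊆ E := Finset.filter_subset _ _

lemma sameCell_of_not_cut {d : ℕ} {t : Fin d → ℤ} {E : Finset (Sym2 (Fin d → ℤ))}
    {e : Sym2 (Fin d → ℤ)} (he : e ∈ E) (hne : e ∉ cutE t E) : sameCell t e := by
  by_contra h
  exact hne (Finset.mem_filter.2 ⟨he, h⟩)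

lemma cutE_card {d : ℕ} (t : Fin d → ℤ) (V : Finset (Fin d → ℤ))
    (E : Finset (Sym2 (Fin d → ℤ)))
    (hE : ∀ e ∈ E, e ∈ (latticeGraph d).edgeSet)
    (hEV : ∀ e ∈ E, ∀ v ∈ e, v ∈ V) :
    (cutE t E).card ≤
      ∑ j, (V.filter (fun x => x j = t j ∧ x + unitv d j ∈ V)).card := by
  classical
  have hsub : cutE t E ⊆ Finset.univ.biUnion
      (fun j => (V.filter (fun x => x j = t j ∧ x + unitv d j ∈ V)).image
        (fun x => s(x, x + unitv d j))) := by
    intro e he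
    rw [cutE, Finset.mem_filter] at he
    obtain ⟨heE, hnc⟩ := he
    obtain ⟨x, j, rfl⟩ := lattice_edge (hE e heE)
    have hxt : x j = t j := by
      by_contra hxt
      apply hnc
      intro a ha b hb
      rw [Sym2.mem_iff] at ha hb
      have key := cellLe_step t x j hxt
      rcases ha with rfl | rfl <;> rcases hb with rfl | rfl <;> simp [key]
    refine Finset.mem_biUnion.2 ⟨j, Finset.mem_univ j, Finset.mem_image.2 ⟨x, ?_, rfl⟩⟩
    refine Finset.mem_filter.2 ⟨?_, hxt, ?_⟩
    · exact hEV _ heE x (Sym2.mem_mk_left _ _)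
    · exact hEV _ heE _ (Sym2.mem_mk_right _ _)
  calc (cutE t E).card ≤ _ := Finset.card_le_card hsub
    _ ≤ ∑ j, ((V.filter (fun x => x j = t j ∧ x + unitv d j ∈ V)).image
        (fun x => s(x, x + unitv d j))).card := Finset.card_biUnion_le
    _ ≤ _ := Finset.sum_le_sum (fun j _ => Finset.card_image_le)

/-- walk transfer lemma -/
lemma reach_transfer {d : ℕ} (F F' : Finset (Sym2 (Fin d → ℤ)))
    (P : (Fin d → ℤ) → Prop)
    (hstep : ∀ e ∈ F, ∀ a ∈ e, ∀ b ∈ e, P a → P b)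
    (htrans : ∀ e ∈ F, (∀ a ∈ e, P a) → e ∈ F')
    (x y : Fin d → ℤ) (hx : P x)
    (hr : (SimpleGraph.fromEdgeSet (F : Set (Sym2 (Fin d → ℤ)))).Reachable x y) :
    P y ∧ (SimpleGraph.fromEdgeSet (F' : Set (Sym2 (Fin d → ℤ)))).Reachable x y := by
  obtain ⟨w⟩ := hr
  induction w with
  | nil => exact ⟨hx, SimpleGraph.Reachable.refl _⟩
  | @cons u v z h p ih =>
    rw [SimpleGraph.fromEdgeSet_adj] at h
    obtain ⟨hmem, hne⟩ := h
    rw [Finset.mem_coe] at hmem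
    have hPv : P v := hstep _ hmem u (Sym2.mem_mk_left _ _) v (Sym2.mem_mk_right _ _) hx
    have he' : s(u, v) ∈ F' := by
      apply htrans _ hmem
      intro a ha
      rw [Sym2.mem_iff] at ha
      rcases ha with rfl | rfl
      · exact hx
      · exact hPv
    have hadj : (SimpleGraph.fromEdgeSet (F' : Set (Sym2 (Fin d → ℤ)))).Adj u v :=
      (SimpleGraph.fromEdgeSet_adj _).2 ⟨Finset.mem_coe.2 he', hne⟩
    obtain ⟨hPy, hry⟩ := ih hPv
    exact ⟨hPy, (hadj.reachable).trans hry⟩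

lemma slice_card_le {d : ℕ} (A : ℝ) (hA : 4 ≤ A) (V : Finset (Fin d → ℤ)) (hV : V.Nonempty)
    (hdiam : ∀ i : Fin d, ∀ x ∈ V, ∀ y ∈ V, ((x i - y i : ℤ) : ℝ) ≤ A - 1)
    (j : Fin d) (s : ℤ) :
    ((V.filter (fun x => x j = s)).card : ℝ) ≤ A ^ (d - 1) := by
  classical
  have hA0 : (0:ℝ) < A := by linarith
  have hminmax : ∀ i : Fin d, ∃ mi Mi : ℤ, (∃ u ∈ V, u i = mi) ∧ (∃ u ∈ V, u i = Mi) ∧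
      ∀ x ∈ V, mi ≤ x i ∧ x i ≤ Mi := by
    intro i
    refine ⟨(V.image (fun x => x i)).min' (hV.image _),
      (V.image (fun x => x i)).max' (hV.image _), ?_, ?_, ?_⟩
    · obtain ⟨u, hu, hu'⟩ := Finset.mem_image.1 ((V.image (fun x => x i)).min'_mem (hV.image _))
      exact ⟨u, hu, hu'⟩
    · obtain ⟨u, hu, hu'⟩ := Finset.mem_image.1 ((V.image (fun x => x i)).max'_mem (hV.image _))
      exact ⟨u, hu, hu'⟩
    · intro x hx
      exact ⟨Finset.min'_le _ _ (Finset.mem_image_of_mem (fun x => x i) hx),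
        Finset.le_max' _ _ (Finset.mem_image_of_mem (fun x => x i) hx)⟩
  choose m Mx hmmem hMmem hbound using hminmax
  set lo : Fin d → ℤ := Function.update m j s with hlo
  set hi : Fin d → ℤ := Function.update Mx j s with hhi
  have hsub : V.filter (fun x => x j = s) ⊆ Finset.Icc lo hi := by
    intro x hx
    rw [Finset.mem_filter] at hx
    obtain ⟨hxV, hxj⟩ := hx
    rw [Finset.mem_Icc]
    constructor
    · intro i
      by_cases hij : i = j
      · subst hij; simp [hlo, hxj]
      · simp only [hlo, Function.update_of_ne hij]
        exact (hbound i x hxV).1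
    · intro i
      by_cases hij : i = j
      · subst hij; simp [hhi, hxj]
      · simp only [hhi, Function.update_of_ne hij]
        exact (hbound i x hxV).2
  have hcard : (V.filter (fun x => x j = s)).card ≤ (Finset.Icc lo hi).card :=
    Finset.card_le_card hsub
  have hIcc : ((Finset.Icc lo hi).card : ℝ) = ∏ i, ((Finset.Icc (lo i) (hi i)).card : ℝ) := by
    rw [Pi.card_Icc]; push_cast; ring
  have hfac : ∀ i : Fin d, ((Finset.Icc (lo i) (hi i)).card : ℝ) ≤
      if i = j then 1 else A := by
    intro i
    by_cases hij : i = j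
    · subst hij
      simp [hlo, hhi]
    · rw [if_neg hij]
      simp only [hlo, hhi, Function.update_of_ne hij]
      rw [Int.card_Icc]
      obtain ⟨x, hxV, hx⟩ := hMmem i
      obtain ⟨y, hyV, hy⟩ := hmmem i
      have hd1 : ((x i - y i : ℤ) : ℝ) ≤ A - 1 := hdiam i x hxV y hyV
      have hmle : m i ≤ Mx i := hx ▸ (hbound i x hxV).1
      have hnn : (0:ℤ) ≤ Mx i + 1 - m i := by linarith
      have hcast : (((Mx i + 1 - m i).toNat : ℕ) : ℝ) = ((Mx i : ℝ) + 1 - (m i : ℝ)) := by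
        rw [← Int.cast_natCast, Int.toNat_of_nonneg hnn]
        push_cast
        ring
      rw [hcast]
      have hx' : ((x i : ℤ) : ℝ) = ((Mx i : ℤ) : ℝ) := by exact_mod_cast hx
      have hy' : ((y i : ℤ) : ℝ) = ((m i : ℤ) : ℝ) := by exact_mod_cast hy
      push_cast at hd1 hx' hy' ⊢
      linarith
  have hprod : (∏ i, ((Finset.Icc (lo i) (hi i)).card : ℝ)) ≤
      ∏ i, (if i = j then (1:ℝ) else A) := by
    apply Finset.prod_le_prod
    · intro i _; positivity
    · intro i _; exact hfac i
  have hval : (∏ i, (if i = j then (1:ℝ) else A)) = A ^ (d - 1) := by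
    rw [← Finset.mul_prod_erase Finset.univ _ (Finset.mem_univ j), if_pos rfl, one_mul]
    rw [Finset.prod_congr rfl (fun i hi => if_neg (Finset.mem_erase.1 hi).1)]
    rw [Finset.prod_const, Finset.card_erase_of_mem (Finset.mem_univ j), Finset.card_univ,
      Fintype.card_fin]
  calc ((V.filter (fun x => x j = s)).card : ℝ) ≤ ((Finset.Icc lo hi).card : ℝ) := by
        exact_mod_cast hcard
    _ = _ := hIcc
    _ ≤ _ := hprod
    _ = _ := hval


set_option maxHeartbeats 1000000 in
lemma choose_cut {d : ℕ} (hd : 2 ≤ d) (A : ℝ) (hA : 4 ≤ A) (k : ℕ)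
    (V : Finset (Fin d → ℤ)) (hV : V.Nonempty)
    (hcard : (V.card : ℝ) ≤ A ^ d)
    (j : Fin d)
    (hdiamj : ∀ x ∈ V, ∀ y ∈ V, ((x j - y j : ℤ) : ℝ) ≤ (3/2:ℝ)^(k+1) * (A-1)) :
    ∃ t : ℤ,
      (∀ x ∈ V, ∀ y ∈ V, x j ≤ t → y j ≤ t →
        ((x j - y j : ℤ) : ℝ) ≤ (3/2:ℝ)^k * (A-1)) ∧
      (∀ x ∈ V, ∀ y ∈ V, t < x j → t < y j →
        ((x j - y j : ℤ) : ℝ) ≤ (3/2:ℝ)^k * (A-1)) ∧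
      ((V.filter (fun x => x j = t ∧ x + unitv d j ∈ V)).card : ℝ) ≤
        12 * d * (2/3:ℝ)^k * A ^ (d-1) := by
  classical
  have hA0 : (0:ℝ) < A := by linarith
  have h32k : (1:ℝ) ≤ (3/2)^k := by
    have := pow_le_pow_left₀ (by norm_num : (0:ℝ) ≤ 1) (by norm_num : (1:ℝ) ≤ 3/2) k
    simpa using this
  have h32pos : (0:ℝ) < (3/2:ℝ)^k := by positivity
  set D : ℝ := (3/2:ℝ)^k * (A-1) with hDdef
  have hD3 : 3 ≤ D := by nlinarith
  have hDpos : 0 < D := by linarith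
  have hAd1pos : (0:ℝ) < A ^ (d-1) := by positivity
  have hAd : A ^ d = A ^ (d-1) * A := by
    rw [← pow_succ]; congr 1; omega
  have hRHSpos : (0:ℝ) ≤ 12 * d * (2/3:ℝ)^k * A ^ (d-1) := by positivity
  have hTD : 2 * A ^ d ≤ (12 * d * (2/3:ℝ)^k * A ^ (d-1)) * D := by
    rw [hDdef, hAd]
    have h23 : (2/3:ℝ)^k * (3/2:ℝ)^k = 1 := by rw [← mul_pow]; norm_num
    have hd2 : (2:ℝ) ≤ (d:ℝ) := by exact_mod_cast hd
    have expand : (12 * d * (2/3:ℝ)^k * A ^ (d-1)) * ((3/2:ℝ)^k * (A-1))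
        = 12 * d * A ^ (d-1) * (A - 1) * ((2/3:ℝ)^k * (3/2:ℝ)^k) := by ring
    rw [expand, h23, mul_one]
    have key : 2 * A ≤ 12 * (d:ℝ) * (A - 1) := by
      nlinarith [mul_nonneg (by linarith : (0:ℝ) ≤ (d:ℝ) - 2) (by linarith : (0:ℝ) ≤ A - 1)]
    nlinarith [mul_le_mul_of_nonneg_left key (le_of_lt hAd1pos)]
  -- min and max of coordinate j
  obtain ⟨m, M, hmmem, hMmem, hb⟩ :
      ∃ mi Mi : ℤ, (∃ u ∈ V, u j = mi) ∧ (∃ u ∈ V, u j = Mi) ∧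
        ∀ x ∈ V, mi ≤ x j ∧ x j ≤ Mi := by
    refine ⟨(V.image (fun x => x j)).min' (hV.image _),
      (V.image (fun x => x j)).max' (hV.image _), ?_, ?_, ?_⟩
    · obtain ⟨u, hu, hu'⟩ := Finset.mem_image.1 ((V.image (fun x => x j)).min'_mem (hV.image _))
      exact ⟨u, hu, hu'⟩
    · obtain ⟨u, hu, hu'⟩ := Finset.mem_image.1 ((V.image (fun x => x j)).max'_mem (hV.image _))
      exact ⟨u, hu, hu'⟩
    · intro x hx
      exact ⟨Finset.min'_le _ _ (Finset.mem_image_of_mem (fun x => x j) hx),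
        Finset.le_max' _ _ (Finset.mem_image_of_mem (fun x => x j) hx)⟩
  by_cases hsmall : ((M - m : ℤ) : ℝ) ≤ D
  · refine ⟨M, ?_, ?_, ?_⟩
    · intro x hx y hy _ _
      have h1 := (hb x hx).2
      have h2 := (hb y hy).1
      have : ((x j - y j : ℤ) : ℝ) ≤ ((M - m : ℤ) : ℝ) := by exact_mod_cast (by omega : x j - y j ≤ M - m)
      linarith
    · intro x hx _ hlt _
      exact absurd (hb x hx).2 (by omega)
    · have hempty : V.filter (fun x => x j = M ∧ x + unitv d j ∈ V) = ∅ := by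
        rw [Finset.filter_eq_empty_iff]
        rintro x hx ⟨hxj, hxu⟩
        have := (hb _ hxu).2
        simp [unitv] at this
        omega
      rw [hempty]
      simpa using hRHSpos
  · push_neg at hsmall
    set F : ℤ := ⌊D⌋ with hF
    have hFle : (F : ℝ) ≤ D := Int.floor_le D
    have hFgt : D - 1 < (F : ℝ) := by
      have := Int.lt_floor_add_one D; linarith
    clear_value F
    -- the window of candidate cuts
    set W : Finset ℤ := Finset.Icc (M - 1 - F) (m + F) with hW
    clear_value W
    have hMm32 : ((M - m : ℤ) : ℝ) ≤ (3/2) * D := by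
      obtain ⟨u, hu, hu'⟩ := hMmem
      obtain ⟨v, hv, hv'⟩ := hmmem
      have := hdiamj u hu v hv
      rw [pow_succ] at this
      have heq : ((u j - v j : ℤ) : ℝ) = ((M - m : ℤ) : ℝ) := by exact_mod_cast by omega
      rw [heq] at this
      rw [hDdef]; linarith
    have hz : (D/2 : ℝ) < ((m + F + 1 - (M - 1 - F) : ℤ) : ℝ) := by
      push_cast
      push_cast at hMm32
      linarith
    have hzpos : (0:ℤ) < m + F + 1 - (M - 1 - F) := by
      have : (0:ℝ) < ((m + F + 1 - (M - 1 - F) : ℤ) : ℝ) := lt_trans (by linarith) hz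
      exact_mod_cast this
    have hWne : W.Nonempty := by
      rw [hW, Finset.nonempty_Icc]; omega
    have hWcard : (D/2 : ℝ) < (W.card : ℝ) := by
      rw [hW, Int.card_Icc]
      rw [show ((m + F + 1 - (M - 1 - F)).toNat : ℝ) = ((m + F + 1 - (M - 1 - F) : ℤ) : ℝ) from
        by rw [← Int.cast_natCast, Int.toNat_of_nonneg (le_of_lt hzpos)]]
      exact hz
    -- choose minimizing slice
    obtain ⟨t, htW, htmin⟩ := Finset.exists_min_image W (fun s => (V.filter (fun x => x j = s)).card) hWne
    rw [hW, Finset.mem_Icc] at htW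
    have havg : (W.card : ℕ) * (V.filter (fun x => x j = t)).card ≤ V.card := by
      have h1 : W.card • (V.filter (fun x => x j = t)).card ≤
          ∑ s ∈ W, (V.filter (fun x => x j = s)).card := by
        apply Finset.card_nsmul_le_sum
        intro s hs
        exact htmin s hs
      have h2 : (V.filter (fun x => x j ∈ W)).card =
          ∑ s ∈ W, ((V.filter (fun x => x j ∈ W)).filter (fun x => x j = s)).card := by
        apply Finset.card_eq_sum_card_fiberwise
        intro x hx
        exact (Finset.mem_filter.1 hx).2
      have h3 : ∀ s ∈ W, (V.filter (fun x => x j ∈ W)).filter (fun x => x j = s) =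
          V.filter (fun x => x j = s) := by
        intro s hs
        rw [Finset.filter_filter]
        apply Finset.filter_congr
        intro x _
        constructor
        · rintro ⟨_, h⟩; exact h
        · intro h; exact ⟨by rw [h]; exact hs, h⟩
      calc (W.card : ℕ) * (V.filter (fun x => x j = t)).card
          = W.card • (V.filter (fun x => x j = t)).card := by rw [smul_eq_mul]
        _ ≤ ∑ s ∈ W, (V.filter (fun x => x j = s)).card := h1
        _ = ∑ s ∈ W, ((V.filter (fun x => x j ∈ W)).filter (fun x => x j = s)).card :=
            (Finset.sum_congr rfl (fun s hs => by rw [h3 s hs])).symm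
        _ = (V.filter (fun x => x j ∈ W)).card := h2.symm
        _ ≤ V.card := Finset.card_le_card (Finset.filter_subset _ _)
    obtain ⟨c, hc⟩ : ∃ c : ℝ, c = ((V.filter (fun x => x j = t)).card : ℝ) := ⟨_, rfl⟩
    have hsliceT : c ≤ 12 * d * (2/3:ℝ)^k * A ^ (d-1) := by
      have hc0 : (0:ℝ) ≤ c := by rw [hc]; exact Nat.cast_nonneg _
      have h5 : ((W.card : ℝ) * c ≤ (V.card : ℝ)) := by
        rw [hc, ← Nat.cast_mul]
        exact Nat.cast_le.2 havg
      have hmul : c * (D/2) ≤ A ^ d := by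
        calc c * (D/2) ≤ c * (W.card : ℝ) := by
              apply mul_le_mul_of_nonneg_left (le_of_lt hWcard) hc0
          _ = (W.card : ℝ) * c := mul_comm _ _
          _ ≤ (V.card : ℝ) := h5
          _ ≤ A ^ d := hcard
      have h6 : c * D ≤ (12 * d * (2/3:ℝ)^k * A ^ (d-1)) * D := by linarith
      exact le_of_mul_le_mul_right h6 hDpos
    rw [hc] at hsliceT
    refine ⟨t, ?_, ?_, ?_⟩
    · intro x hx y hy hxt hyt
      have h2 := (hb y hy).1
      have : ((x j - y j : ℤ) : ℝ) ≤ (F : ℝ) := by exact_mod_cast (by linarith : x j - y j ≤ F)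
      rw [hDdef] at hFle
      linarith
    · intro x hx y hy hxt hyt
      have h1 := (hb x hx).2
      have : ((x j - y j : ℤ) : ℝ) ≤ (F : ℝ) := by exact_mod_cast (by linarith : x j - y j ≤ F)
      rw [hDdef] at hFle
      linarith
    · calc ((V.filter (fun x => x j = t ∧ x + unitv d j ∈ V)).card : ℝ)
          ≤ ((V.filter (fun x => x j = t)).card : ℝ) := by
            have : V.filter (fun x => x j = t ∧ x + unitv d j ∈ V) ⊆
                V.filter (fun x => x j = t) := by
              intro x hx
              rw [Finset.mem_filter] at hx ⊢
              exact ⟨hx.1, hx.2.1⟩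
            exact_mod_cast Finset.card_le_card this
      _ ≤ _ := hsliceT

lemma comp_card_le {d : ℕ} (V : Finset (Fin d → ℤ)) (E₁ : Finset (Sym2 (Fin d → ℤ)))
    (hEV : ∀ e ∈ E₁, ∀ v ∈ e, v ∈ V) {L : Type*} [DecidableEq L] (g : (Fin d → ℤ) → L)
    (hconst : ∀ e ∈ E₁, ∀ a ∈ e, ∀ b ∈ e, g a = g b) (x : Fin d → ℤ) (hx : x ∈ V) :
    ({y | y ∈ V ∧ (SimpleGraph.fromEdgeSet (E₁ : Set (Sym2 (Fin d → ℤ)))).Reachable x y}).ncard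
      ≤ (V.filter (fun y => g y = g x)).card := by
  classical
  have hsub : {y | y ∈ V ∧ (SimpleGraph.fromEdgeSet (E₁ : Set (Sym2 (Fin d → ℤ)))).Reachable x y}
      ⊆ ↑(V.filter (fun y => g y = g x)) := by
    rintro y ⟨hyV, hr⟩
    have := reach_transfer E₁ E₁ (fun z => z ∈ V ∧ g z = g x)
      (fun e he a ha b hb hPa => ⟨hEV e he b hb, (hconst e he a ha b hb) ▸ hPa.2⟩)
      (fun e he _ => he) x y ⟨hx, rfl⟩ hr
    simpa using this.1
  calc _ ≤ (↑(V.filter (fun y => g y = g x)) : Set (Fin d → ℤ)).ncard :=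
        Set.ncard_le_ncard hsub (Finset.finite_toSet _)
    _ = _ := Set.ncard_coe_finset _

set_option maxHeartbeats 2000000 in
lemma key_base {d : ℕ} (hd : 2 ≤ d) (A : ℝ) (hA : 4 ≤ A)
    (V : Finset (Fin d → ℤ)) (E : Finset (Sym2 (Fin d → ℤ)))
    (hE : ∀ e ∈ E, e ∈ (latticeGraph d).edgeSet)
    (hEV : ∀ e ∈ E, ∀ v ∈ e, v ∈ V)
    (hcard : (V.card : ℝ) ≤ A ^ d)
    (hdiam : ∀ i : Fin d, ∀ x ∈ V, ∀ y ∈ V, ((x i - y i : ℤ) : ℝ) ≤ A - 1) :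
    ∃ E₀ ⊆ E, (E₀.card : ℝ) ≤ 2 * A ^ (d - 1) ∧
      ∀ x ∈ V, (({y | y ∈ V ∧ (SimpleGraph.fromEdgeSet
          ((E \ E₀ : Finset (Sym2 (Fin d → ℤ))) : Set (Sym2 (Fin d → ℤ)))).Reachable x y}).ncard : ℝ)
        ≤ ((⌈A ^ d / 2⌉ : ℤ) : ℝ) := by
  classical
  have hA0 : (0:ℝ) < A := by linarith
  have hAd1pos : (0:ℝ) < A ^ (d - 1) := by positivity
  have hAd : A ^ d = A ^ (d - 1) * A := by rw [← pow_succ]; congr 1; omega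
  set M : ℝ := ((⌈A ^ d / 2⌉ : ℤ) : ℝ) with hMdef
  have hMhalf : A ^ d / 2 ≤ M := Int.le_ceil _
  have hM0 : (0:ℝ) ≤ M := le_trans (by positivity) hMhalf
  have hAd1M : A ^ (d-1) ≤ M := by
    have : 2 * A ^ (d-1) ≤ A ^ d := by rw [hAd]; nlinarith
    linarith
  rcases V.eq_empty_or_nonempty with hVe | hV
  · refine ⟨∅, Finset.empty_subset _, by simp; positivity, ?_⟩
    intro x hx
    rw [hVe] at hx
    exact absurd hx (Finset.notMem_empty x)
  -- coordinate mins and maxes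
  have hminmax : ∀ i : Fin d, ∃ mi Mi : ℤ, (∃ u ∈ V, u i = mi) ∧ (∃ u ∈ V, u i = Mi) ∧
      ∀ x ∈ V, mi ≤ x i ∧ x i ≤ Mi := by
    intro i
    refine ⟨(V.image (fun x => x i)).min' (hV.image _),
      (V.image (fun x => x i)).max' (hV.image _), ?_, ?_, ?_⟩
    · obtain ⟨u, hu, hu'⟩ := Finset.mem_image.1 ((V.image (fun x => x i)).min'_mem (hV.image _))
      exact ⟨u, hu, hu'⟩
    · obtain ⟨u, hu, hu'⟩ := Finset.mem_image.1 ((V.image (fun x => x i)).max'_mem (hV.image _))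
      exact ⟨u, hu, hu'⟩
    · intro x hx
      exact ⟨Finset.min'_le _ _ (Finset.mem_image_of_mem (fun x => x i) hx),
        Finset.le_max' _ _ (Finset.mem_image_of_mem (fun x => x i) hx)⟩
  choose mc Mc hmcmem hMcmem hbound using hminmax
  set j₀ : Fin d := ⟨0, by omega⟩ with hj₀
  set n : ℕ := V.card with hn
  -- median choice
  set Wset : Finset ℤ := (Finset.Icc (mc j₀) (Mc j₀)).filter
    (fun s => n ≤ 2 * (V.filter (fun x => x j₀ ≤ s)).card) with hWset
  have hWne : Wset.Nonempty := by
    refine ⟨Mc j₀, Finset.mem_filter.2 ⟨Finset.mem_Icc.2 ⟨?_, le_refl _⟩, ?_⟩⟩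
    · obtain ⟨u, hu, hu'⟩ := hMcmem j₀
      have := (hbound j₀ u hu).1
      omega
    · have : V.filter (fun x => x j₀ ≤ Mc j₀) = V := by
        apply Finset.filter_true_of_mem
        intro x hx
        exact (hbound j₀ x hx).2
      rw [this]
      omega
  obtain ⟨t, htW, htmin0⟩ := Finset.exists_min_image Wset (fun s => s) hWne
  have htmin : ∀ s ∈ Wset, t ≤ s := fun s hs => htmin0 s hs
  clear htmin0
  have htmem : t ∈ Finset.Icc (mc j₀) (Mc j₀) ∧ n ≤ 2 * (V.filter (fun x => x j₀ ≤ t)).card := by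
    rw [hWset, Finset.mem_filter] at htW
    exact htW
  obtain ⟨ct, hct⟩ : ∃ c, (V.filter (fun x => x j₀ ≤ t)).card = c := ⟨_, rfl⟩
  rw [hct] at htmem
  -- thresholds
  set t1 : Fin d → ℤ := Function.update Mc j₀ (t - 1) with ht1
  set t2 : Fin d → ℤ := Function.update Mc j₀ t with ht2
  set E₀ : Finset (Sym2 (Fin d → ℤ)) := cutE t1 E ∪ cutE t2 E with hE₀
  have hE₀sub : E₀ ⊆ E := Finset.union_subset (cutE_subset _ _) (cutE_subset _ _)
  -- card bound for each cut
  have hcutcard : ∀ t' : Fin d → ℤ, t' = Function.update Mc j₀ (t' j₀) →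
      ((cutE t' E).card : ℝ) ≤ A ^ (d - 1) := by
    intro t' ht'
    have h1 := cutE_card t' V E hE hEV
    have hzero : ∀ j, j ≠ j₀ → (V.filter (fun x => x j = t' j ∧ x + unitv d j ∈ V)) = ∅ := by
      intro j hj
      rw [Finset.filter_eq_empty_iff]
      rintro x hx ⟨hxj, hxu⟩
      have h2 := (hbound j _ hxu).2
      have ht'j : t' j = Mc j := by rw [ht']; simp [Function.update_of_ne hj]
      simp [unitv] at h2
      rw [ht'j] at hxj
      linarith
    have hsum : (∑ j, (V.filter (fun x => x j = t' j ∧ x + unitv d j ∈ V)).card)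
        = (V.filter (fun x => x j₀ = t' j₀ ∧ x + unitv d j₀ ∈ V)).card := by
      apply Finset.sum_eq_single j₀
      · intro j _ hj; rw [hzero j hj]; simp
      · intro h; exact absurd (Finset.mem_univ _) h
    have hsub2 : (V.filter (fun x => x j₀ = t' j₀ ∧ x + unitv d j₀ ∈ V)) ⊆
        (V.filter (fun x => x j₀ = t' j₀)) := by
      intro x hx
      rw [Finset.mem_filter] at hx ⊢
      exact ⟨hx.1, hx.2.1⟩
    have h3 : ((cutE t' E).card : ℕ) ≤ (V.filter (fun x => x j₀ = t' j₀)).card := by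
      calc (cutE t' E).card ≤ _ := h1
        _ = _ := hsum
        _ ≤ _ := Finset.card_le_card hsub2
    calc ((cutE t' E).card : ℝ) ≤ ((V.filter (fun x => x j₀ = t' j₀)).card : ℝ) := by
          exact_mod_cast h3
      _ ≤ A ^ (d - 1) := slice_card_le A hA V hV hdiam j₀ (t' j₀)
  have hcard₀ : (E₀.card : ℝ) ≤ 2 * A ^ (d - 1) := by
    have h1 : (E₀.card : ℕ) ≤ (cutE t1 E).card + (cutE t2 E).card := by
      rw [hE₀]; exact Finset.card_union_le _ _
    have h2 := hcutcard t1 (by rw [ht1]; simp)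
    have h3 := hcutcard t2 (by rw [ht2]; simp)
    have h4 : ((E₀.card : ℕ) : ℝ) ≤ ((cutE t1 E).card : ℝ) + ((cutE t2 E).card : ℝ) := by
      exact_mod_cast h1
    linarith
  refine ⟨E₀, hE₀sub, hcard₀, ?_⟩
  -- components
  intro x hx
  set g : (Fin d → ℤ) → Bool × Bool :=
    fun y => (decide (y j₀ ≤ t - 1), decide (y j₀ ≤ t)) with hg
  have hconst : ∀ e ∈ E \ E₀, ∀ a ∈ e, ∀ b ∈ e, g a = g b := by
    intro e he a ha b hb
    rw [Finset.mem_sdiff, hE₀, Finset.mem_union] at he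
    obtain ⟨heE, hen⟩ := he
    push_neg at hen
    have hs1 := sameCell_of_not_cut heE hen.1 a ha b hb
    have hs2 := sameCell_of_not_cut heE hen.2 a ha b hb
    have hc1 := congrFun hs1 j₀
    have hc2 := congrFun hs2 j₀
    simp only [cellLe, ht1, ht2, Function.update_self] at hc1 hc2
    rw [hg]
    simp only [Prod.mk.injEq]
    exact ⟨hc1, hc2⟩
  have hEV' : ∀ e ∈ E \ E₀, ∀ v ∈ e, v ∈ V := fun e he => hEV e (Finset.mem_sdiff.1 he).1
  -- bound the fiber
  have hfibM : ((V.filter (fun y => g y = g x)).card : ℝ) ≤ M := by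
    by_cases hx1 : x j₀ ≤ t - 1
    · -- fiber inside lower part
      clear hct
      have hsub : V.filter (fun y => g y = g x) ⊆ V.filter (fun y => y j₀ ≤ t - 1) := by
        intro y hy
        rw [Finset.mem_filter] at hy ⊢
        refine ⟨hy.1, ?_⟩
        have h1 : (y j₀ ≤ t - 1) ↔ (x j₀ ≤ t - 1) := by
          have := congrArg Prod.fst hy.2
          simpa [hg, decide_eq_decide] using this
        exact h1.2 hx1
      have hP1 : ((V.filter (fun y => y j₀ ≤ t - 1)).card : ℝ) ≤ M := by
        by_cases htm : mc j₀ < t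
        · have ht1I : t - 1 ∈ Finset.Icc (mc j₀) (Mc j₀) := by
            rw [Finset.mem_Icc]
            have := Finset.mem_Icc.1 htmem.1
            omega
          have hnot : t - 1 ∉ Wset := by
            intro hmem
            have := htmin _ hmem
            omega
          have hcond : ¬ (n ≤ 2 * (V.filter (fun x => x j₀ ≤ t - 1)).card) := by
            intro hc
            exact hnot (by rw [hWset]; exact Finset.mem_filter.2 ⟨ht1I, hc⟩)
          push_neg at hcond
          have hreal : 2 * ((V.filter (fun x => x j₀ ≤ t - 1)).card : ℝ) < (n : ℝ) := by
            exact_mod_cast hcond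
          clear hcond
          have hnA : (n : ℝ) ≤ A ^ d := hcard
          linarith
        · have hempty : V.filter (fun y => y j₀ ≤ t - 1) = ∅ := by
            rw [Finset.filter_eq_empty_iff]
            intro y hy
            have h2 := (hbound j₀ y hy).1
            have := Finset.mem_Icc.1 htmem.1
            omega
          rw [hempty]
          simpa using hM0
      calc ((V.filter (fun y => g y = g x)).card : ℝ)
          ≤ ((V.filter (fun y => y j₀ ≤ t - 1)).card : ℝ) := by
            exact_mod_cast Finset.card_le_card hsub
        _ ≤ M := hP1
    · by_cases hx2 : x j₀ ≤ t
      · -- fiber inside the slice at t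
        clear hct
        have hsub : V.filter (fun y => g y = g x) ⊆ V.filter (fun y => y j₀ = t) := by
          intro y hy
          rw [Finset.mem_filter] at hy ⊢
          refine ⟨hy.1, ?_⟩
          have h1 : (y j₀ ≤ t - 1) ↔ (x j₀ ≤ t - 1) := by
            have := congrArg Prod.fst hy.2
            simpa [hg, decide_eq_decide] using this
          have h2 : (y j₀ ≤ t) ↔ (x j₀ ≤ t) := by
            have := congrArg Prod.snd hy.2
            simpa [hg, decide_eq_decide] using this
          have := h2.2 hx2
          have := fun hc => hx1 (h1.1 hc)
          omega
        calc ((V.filter (fun y => g y = g x)).card : ℝ)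
            ≤ ((V.filter (fun y => y j₀ = t)).card : ℝ) := by
              exact_mod_cast Finset.card_le_card hsub
          _ ≤ A ^ (d - 1) := slice_card_le A hA V hV hdiam j₀ t
          _ ≤ M := hAd1M
      · -- fiber inside the upper part
        have hsub : V.filter (fun y => g y = g x) ⊆ V.filter (fun y => ¬ y j₀ ≤ t) := by
          intro y hy
          rw [Finset.mem_filter] at hy ⊢
          refine ⟨hy.1, ?_⟩
          have h2 : (y j₀ ≤ t) ↔ (x j₀ ≤ t) := by
            have := congrArg Prod.snd hy.2
            simpa [hg, decide_eq_decide] using this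
          exact fun hc => hx2 (h2.1 hc)
        have hP3 : ((V.filter (fun y => ¬ y j₀ ≤ t)).card : ℝ) ≤ M := by
          have hsplit : (V.filter (fun y => y j₀ ≤ t)).card
              + (V.filter (fun y => ¬ y j₀ ≤ t)).card = n :=
            Finset.card_filter_add_card_filter_not _
          obtain ⟨c3, hc3⟩ : ∃ c, (V.filter (fun y => ¬ y j₀ ≤ t)).card = c := ⟨_, rfl⟩
          rw [hc3, hct] at hsplit
          have h2n := htmem.2
          have hle : 2 * c3 ≤ n := by clear hc3 hct; omega
          have hreal : 2 * ((V.filter (fun y => ¬ y j₀ ≤ t)).card : ℝ) ≤ (n : ℝ) := by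
            rw [hc3]; exact_mod_cast hle
          have hnA : (n : ℝ) ≤ A ^ d := hcard
          linarith
        calc ((V.filter (fun y => g y = g x)).card : ℝ)
            ≤ ((V.filter (fun y => ¬ y j₀ ≤ t)).card : ℝ) := by
              exact_mod_cast Finset.card_le_card hsub
          _ ≤ M := hP3
  have hfib := comp_card_le V (E \ E₀) hEV' g hconst x hx
  calc (({y | y ∈ V ∧ (SimpleGraph.fromEdgeSet
          ((E \ E₀ : Finset (Sym2 (Fin d → ℤ))) : Set (Sym2 (Fin d → ℤ)))).Reachable x y}).ncard : ℝ)
      ≤ ((V.filter (fun y => g y = g x)).card : ℝ) := by exact_mod_cast hfib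
    _ ≤ M := hfibM

set_option maxHeartbeats 2000000 in
lemma key_step {d : ℕ} (hd : 2 ≤ d) (A : ℝ) (hA : 4 ≤ A) (k : ℕ)
    (IH : ∀ V : Finset (Fin d → ℤ), ∀ E : Finset (Sym2 (Fin d → ℤ)),
      (∀ e ∈ E, e ∈ (latticeGraph d).edgeSet) →
      (∀ e ∈ E, ∀ v ∈ e, v ∈ V) →
      ((V.card : ℝ) ≤ A ^ d) →
      (∀ i : Fin d, ∀ x ∈ V, ∀ y ∈ V, ((x i - y i : ℤ) : ℝ) ≤ (3/2:ℝ)^k * (A-1)) →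
      ∃ E₀ ⊆ E, (E₀.card : ℝ) ≤ 2 * A ^ (d-1) + 36 * d^2 * (1 - (2/3:ℝ)^k) * A ^ (d-1) ∧
        ∀ x ∈ V, (({y | y ∈ V ∧ (SimpleGraph.fromEdgeSet
          ((E \ E₀ : Finset (Sym2 (Fin d → ℤ))) : Set (Sym2 (Fin d → ℤ)))).Reachable x y}).ncard : ℝ)
          ≤ ((⌈A ^ d / 2⌉ : ℤ) : ℝ))
    (V : Finset (Fin d → ℤ)) (E : Finset (Sym2 (Fin d → ℤ)))
    (hE : ∀ e ∈ E, e ∈ (latticeGraph d).edgeSet)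
    (hEV : ∀ e ∈ E, ∀ v ∈ e, v ∈ V)
    (hcard : (V.card : ℝ) ≤ A ^ d)
    (hdiam : ∀ i : Fin d, ∀ x ∈ V, ∀ y ∈ V, ((x i - y i : ℤ) : ℝ) ≤ (3/2:ℝ)^(k+1) * (A-1)) :
    ∃ E₀ ⊆ E, (E₀.card : ℝ) ≤ 2 * A ^ (d-1) + 36 * d^2 * (1 - (2/3:ℝ)^(k+1)) * A ^ (d-1) ∧
      ∀ x ∈ V, (({y | y ∈ V ∧ (SimpleGraph.fromEdgeSet
        ((E \ E₀ : Finset (Sym2 (Fin d → ℤ))) : Set (Sym2 (Fin d → ℤ)))).Reachable x y}).ncard : ℝ)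
        ≤ ((⌈A ^ d / 2⌉ : ℤ) : ℝ) := by
  classical
  have hA0 : (0:ℝ) < A := by linarith
  have hAd1pos : (0:ℝ) < A ^ (d - 1) := by positivity
  have hAd : A ^ d = A ^ (d - 1) * A := by rw [← pow_succ]; congr 1; omega
  have he1 : (2/3:ℝ)^k ≤ 1 := pow_le_one₀ (by norm_num) (by norm_num)
  have he0 : (0:ℝ) ≤ (2/3:ℝ)^k := by positivity
  have hd0 : (0:ℝ) ≤ (d:ℝ)^2 := by positivity
  have hterm : (0:ℝ) ≤ 36 * (d:ℝ)^2 * A^(d-1) * (1 - (2/3:ℝ)^k) := by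
    apply mul_nonneg (by positivity) (by linarith)
  set M : ℝ := ((⌈A ^ d / 2⌉ : ℤ) : ℝ) with hMdef
  have hMhalf : A ^ d / 2 ≤ M := Int.le_ceil _
  rcases V.eq_empty_or_nonempty with hVe | hV
  · refine ⟨∅, Finset.empty_subset _, ?_, ?_⟩
    · have h1 : (2/3:ℝ)^(k+1) ≤ 1 := pow_le_one₀ (by norm_num) (by norm_num)
      have h2 : (0:ℝ) ≤ 36 * (d:ℝ)^2 * (1 - (2/3:ℝ)^(k+1)) * A^(d-1) := by
        apply mul_nonneg (mul_nonneg (by positivity) (by linarith)) (le_of_lt hAd1pos)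
      simp only [Finset.card_empty, Nat.cast_zero]
      linarith
    · intro x hx
      rw [hVe] at hx
      exact absurd hx (Finset.notMem_empty x)
  -- choose hyperplane cuts in each direction
  have hchoice := fun j : Fin d => choose_cut hd A hA k V hV hcard j (hdiam j)
  choose tf hlow hhigh hcut using hchoice
  have hEcCard : ((cutE tf E).card : ℝ) ≤ 12 * (d:ℝ)^2 * (2/3:ℝ)^k * A^(d-1) := by
    have h1 := cutE_card tf V E hE hEV
    have h2 : ((cutE tf E).card : ℝ) ≤
        ∑ j : Fin d, ((V.filter (fun x => x j = tf j ∧ x + unitv d j ∈ V)).card : ℝ) := by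
      exact_mod_cast h1
    have h3 : (∑ j : Fin d, ((V.filter (fun x => x j = tf j ∧ x + unitv d j ∈ V)).card : ℝ))
        ≤ ∑ _j : Fin d, 12 * (d:ℝ) * (2/3:ℝ)^k * A^(d-1) :=
      Finset.sum_le_sum (fun j _ => hcut j)
    rw [Finset.sum_const, Finset.card_univ, Fintype.card_fin, nsmul_eq_mul] at h3
    have h4 : (d:ℝ) * (12 * (d:ℝ) * (2/3:ℝ)^k * A^(d-1))
        = 12 * (d:ℝ)^2 * (2/3:ℝ)^k * A^(d-1) := by ring
    linarith
  -- the cell labelling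
  have hconstcell : ∀ e ∈ E, e ∉ cutE tf E → ∀ a ∈ e, ∀ b ∈ e, cellLe tf a = cellLe tf b :=
    fun e he hne => sameCell_of_not_cut he hne
  by_cases hbig : ∃ x₀ ∈ V, M < ((V.filter (fun y => cellLe tf y = cellLe tf x₀)).card : ℝ)
  · -- there is a big cell; recurse inside it
    obtain ⟨x₀, hx₀V, hx₀big⟩ := hbig
    set B : Finset (Fin d → ℤ) := V.filter (fun y => cellLe tf y = cellLe tf x₀) with hB
    set E' : Finset (Sym2 (Fin d → ℤ)) := (E \ cutE tf E).filter (fun e => ∀ v ∈ e, v ∈ B)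
      with hE'
    have hE'E : E' ⊆ E := (Finset.filter_subset _ _).trans Finset.sdiff_subset
    have hE'1 : ∀ e ∈ E', e ∈ (latticeGraph d).edgeSet := fun e he => hE e (hE'E he)
    have hE'V : ∀ e ∈ E', ∀ v ∈ e, v ∈ B := by
      intro e he
      exact (Finset.mem_filter.1 he).2
    have hBV : B ⊆ V := Finset.filter_subset _ _
    have hcard' : ((B.card:ℕ) : ℝ) ≤ A ^ d := by
      have : (B.card:ℕ) ≤ V.card := Finset.card_le_card hBV
      have h2 : ((B.card:ℕ):ℝ) ≤ ((V.card:ℕ):ℝ) := by exact_mod_cast this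
      linarith
    have hdiam' : ∀ i : Fin d, ∀ x ∈ B, ∀ y ∈ B, ((x i - y i : ℤ) : ℝ) ≤ (3/2:ℝ)^k * (A-1) := by
      intro i x hx y hy
      have hxV := hBV hx
      have hyV := hBV hy
      have hgx := (Finset.mem_filter.1 hx).2
      have hgy := (Finset.mem_filter.1 hy).2
      have hcells : cellLe tf x = cellLe tf y := by rw [hgx, hgy]
      have hi : (x i ≤ tf i) ↔ (y i ≤ tf i) := by
        have := congrFun hcells i
        simpa [cellLe, decide_eq_decide] using this
      by_cases hc : x i ≤ tf i
      · exact hlow i x hxV y hyV hc (hi.1 hc)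
      · have hyc : ¬ y i ≤ tf i := fun h => hc (hi.2 h)
        exact hhigh i x hxV y hyV (lt_of_not_ge hc) (lt_of_not_ge hyc)
    obtain ⟨E₀', hE₀'sub, hE₀'card, hE₀'comp⟩ := IH B E' hE'1 hE'V hcard' hdiam'
    refine ⟨cutE tf E ∪ E₀', Finset.union_subset (cutE_subset _ _) (hE₀'sub.trans hE'E), ?_, ?_⟩
    · have h1 : ((cutE tf E ∪ E₀').card : ℕ) ≤ (cutE tf E).card + E₀'.card :=
        Finset.card_union_le _ _
      have h2 : (((cutE tf E ∪ E₀').card : ℕ) : ℝ) ≤ ((cutE tf E).card : ℝ) + (E₀'.card : ℝ) := by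
        exact_mod_cast h1
      have h3 : 12*(d:ℝ)^2*(2/3:ℝ)^k*A^(d-1) + (2*A^(d-1) + 36*(d:ℝ)^2*(1-(2/3:ℝ)^k)*A^(d-1))
          = 2*A^(d-1) + 36*(d:ℝ)^2*(1-(2/3:ℝ)^(k+1))*A^(d-1) := by
        rw [pow_succ (2/3:ℝ) k]; ring
      linarith
    · intro x hx
      by_cases hxB : cellLe tf x = cellLe tf x₀
      · -- x in the big cell
        have hxB' : x ∈ B := Finset.mem_filter.2 ⟨hx, hxB⟩
        have htransfer : ∀ y, y ∈ V →
            (SimpleGraph.fromEdgeSet ((E \ (cutE tf E ∪ E₀') : Finset (Sym2 (Fin d → ℤ))) :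
              Set (Sym2 (Fin d → ℤ)))).Reachable x y →
            y ∈ B ∧ (SimpleGraph.fromEdgeSet ((E' \ E₀' : Finset (Sym2 (Fin d → ℤ))) :
              Set (Sym2 (Fin d → ℤ)))).Reachable x y := by
          intro y hyV hr
          refine reach_transfer _ _ (fun z => z ∈ B) ?_ ?_ x y hxB' hr
          · intro e he a ha b hb hPa
            rw [Finset.mem_sdiff, Finset.mem_union] at he
            push_neg at he
            have hsc := hconstcell e he.1 he.2.1 a ha b hb
            have hbV : b ∈ V := hEV e he.1 b hb
            have hga := (Finset.mem_filter.1 hPa).2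
            exact Finset.mem_filter.2 ⟨hbV, by rw [← hsc]; exact hga⟩
          · intro e he hall
            rw [Finset.mem_sdiff, Finset.mem_union] at he
            push_neg at he
            rw [Finset.mem_sdiff]
            constructor
            · rw [hE']
              exact Finset.mem_filter.2 ⟨Finset.mem_sdiff.2 ⟨he.1, he.2.1⟩, hall⟩
            · exact he.2.2
        have hsub : {y | y ∈ V ∧ (SimpleGraph.fromEdgeSet
              ((E \ (cutE tf E ∪ E₀') : Finset (Sym2 (Fin d → ℤ))) :
                Set (Sym2 (Fin d → ℤ)))).Reachable x y} ⊆
            {y | y ∈ B ∧ (SimpleGraph.fromEdgeSet ((E' \ E₀' : Finset (Sym2 (Fin d → ℤ))) :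
              Set (Sym2 (Fin d → ℤ)))).Reachable x y} := by
          rintro y ⟨hyV, hr⟩
          exact htransfer y hyV hr
        have hfin : ({y | y ∈ B ∧ (SimpleGraph.fromEdgeSet
            ((E' \ E₀' : Finset (Sym2 (Fin d → ℤ))) :
              Set (Sym2 (Fin d → ℤ)))).Reachable x y}).Finite :=
          Set.Finite.subset (Finset.finite_toSet B) (fun y hy => hy.1)
        have hmono := Set.ncard_le_ncard hsub hfin
        have hIHx := hE₀'comp x hxB'
        calc (({y | y ∈ V ∧ (SimpleGraph.fromEdgeSet
              ((E \ (cutE tf E ∪ E₀') : Finset (Sym2 (Fin d → ℤ))) :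
                Set (Sym2 (Fin d → ℤ)))).Reachable x y}).ncard : ℝ)
            ≤ (({y | y ∈ B ∧ (SimpleGraph.fromEdgeSet
              ((E' \ E₀' : Finset (Sym2 (Fin d → ℤ))) :
                Set (Sym2 (Fin d → ℤ)))).Reachable x y}).ncard : ℝ) := by exact_mod_cast hmono
          _ ≤ M := hIHx
      · -- x in a small cell
        have hconst' : ∀ e ∈ E \ (cutE tf E ∪ E₀'), ∀ a ∈ e, ∀ b ∈ e,
            cellLe tf a = cellLe tf b := by
          intro e he
          rw [Finset.mem_sdiff, Finset.mem_union] at he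
          push_neg at he
          exact hconstcell e he.1 he.2.1
        have hEV' : ∀ e ∈ E \ (cutE tf E ∪ E₀'), ∀ v ∈ e, v ∈ V :=
          fun e he => hEV e (Finset.mem_sdiff.1 he).1
        have hfibM : ((V.filter (fun y => cellLe tf y = cellLe tf x)).card : ℝ) ≤ M := by
          by_contra h'
          push_neg at h'
          have hdisj : Disjoint (V.filter (fun y => cellLe tf y = cellLe tf x)) B := by
            rw [Finset.disjoint_left]
            intro y hy hyB
            exact hxB (((Finset.mem_filter.1 hy).2).symm.trans (Finset.mem_filter.1 hyB).2)
          have hunion : (V.filter (fun y => cellLe tf y = cellLe tf x)).card + B.card ≤ V.card := by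
            rw [← Finset.card_union_of_disjoint hdisj]
            apply Finset.card_le_card
            exact Finset.union_subset (Finset.filter_subset _ _) hBV
          have hreal : ((V.filter (fun y => cellLe tf y = cellLe tf x)).card : ℝ) + (B.card : ℝ)
              ≤ (V.card : ℝ) := by exact_mod_cast hunion
          linarith
        have hfib := comp_card_le V (E \ (cutE tf E ∪ E₀')) hEV' (cellLe tf) hconst' x hx
        calc (({y | y ∈ V ∧ (SimpleGraph.fromEdgeSet
              ((E \ (cutE tf E ∪ E₀') : Finset (Sym2 (Fin d → ℤ))) :
                Set (Sym2 (Fin d → ℤ)))).Reachable x y}).ncard : ℝ)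
            ≤ ((V.filter (fun y => cellLe tf y = cellLe tf x)).card : ℝ) := by exact_mod_cast hfib
          _ ≤ M := hfibM
  · -- no big cell: the cuts are enough
    push_neg at hbig
    refine ⟨cutE tf E, cutE_subset _ _, ?_, ?_⟩
    · have h3 : 12*(d:ℝ)^2*(2/3:ℝ)^k*A^(d-1)
          ≤ 2*A^(d-1) + 36*(d:ℝ)^2*(1-(2/3:ℝ)^(k+1))*A^(d-1) := by
        rw [pow_succ (2/3:ℝ) k]
        nlinarith [hterm]
      linarith
    · intro x hx
      have hconst' : ∀ e ∈ E \ cutE tf E, ∀ a ∈ e, ∀ b ∈ e,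
          cellLe tf a = cellLe tf b := by
        intro e he
        rw [Finset.mem_sdiff] at he
        exact hconstcell e he.1 he.2
      have hEV' : ∀ e ∈ E \ cutE tf E, ∀ v ∈ e, v ∈ V :=
        fun e he => hEV e (Finset.mem_sdiff.1 he).1
      have hfib := comp_card_le V (E \ cutE tf E) hEV' (cellLe tf) hconst' x hx
      calc (({y | y ∈ V ∧ (SimpleGraph.fromEdgeSet
            ((E \ cutE tf E : Finset (Sym2 (Fin d → ℤ))) :
              Set (Sym2 (Fin d → ℤ)))).Reachable x y}).ncard : ℝ)
          ≤ ((V.filter (fun y => cellLe tf y = cellLe tf x)).card : ℝ) := by exact_mod_cast hfib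
        _ ≤ M := hbig x hx

lemma key_main {d : ℕ} (hd : 2 ≤ d) (A : ℝ) (hA : 4 ≤ A) : ∀ k : ℕ,
    ∀ V : Finset (Fin d → ℤ), ∀ E : Finset (Sym2 (Fin d → ℤ)),
      (∀ e ∈ E, e ∈ (latticeGraph d).edgeSet) →
      (∀ e ∈ E, ∀ v ∈ e, v ∈ V) →
      ((V.card : ℝ) ≤ A ^ d) →
      (∀ i : Fin d, ∀ x ∈ V, ∀ y ∈ V, ((x i - y i : ℤ) : ℝ) ≤ (3/2:ℝ)^k * (A-1)) →
      ∃ E₀ ⊆ E, (E₀.card : ℝ) ≤ 2 * A ^ (d-1) + 36 * d^2 * (1 - (2/3:ℝ)^k) * A ^ (d-1) ∧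
        ∀ x ∈ V, (({y | y ∈ V ∧ (SimpleGraph.fromEdgeSet
          ((E \ E₀ : Finset (Sym2 (Fin d → ℤ))) : Set (Sym2 (Fin d → ℤ)))).Reachable x y}).ncard : ℝ)
          ≤ ((⌈A ^ d / 2⌉ : ℤ) : ℝ) := by
  intro k
  induction k with
  | zero =>
    intro V E hE hEV hcard hdiam
    have hdiam' : ∀ i : Fin d, ∀ x ∈ V, ∀ y ∈ V, ((x i - y i : ℤ) : ℝ) ≤ A - 1 := by
      intro i x hx y hy
      have := hdiam i x hx y hy
      simpa using this
    obtain ⟨E₀, hsub, hcard₀, hcomp⟩ := key_base hd A hA V E hE hEV hcard hdiam'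
    refine ⟨E₀, hsub, ?_, hcomp⟩
    simp only [pow_zero, sub_self]
    calc (E₀.card : ℝ) ≤ 2 * A ^ (d - 1) := hcard₀
      _ ≤ 2 * A ^ (d - 1) + 36 * d^2 * 0 * A ^ (d-1) := by ring_nf; rfl
  | succ k ih =>
    exact key_step hd A hA k ih


/-- For `k ∈ ℕ` and a real `A ≥ 4`, any subgraph `(V, E)` of `(ℤ^d, 𝔼^d)` with `|V| ≤ A^d`
and `diam V ≤ (3/2)^k (A-1)` admits a set `E₀ ⊆ E` with
`|E₀| ≤ 2 A^(d-1) + 36 d² (1 - (2/3)^k) A^(d-1)` such that every connected component of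
`(V, E \ E₀)` has at most `⌈A^d/2⌉` vertices. -/
theorem butcher_induction (d : ℕ) (hd : 2 ≤ d) (k : ℕ) (A : ℝ) (hA : 4 ≤ A)
    (V : Finset (Fin d → ℤ)) (E : Finset (Sym2 (Fin d → ℤ)))
    (hE : ∀ e ∈ E, e ∈ (latticeGraph d).edgeSet)
    (hEV : ∀ e ∈ E, ∀ v ∈ e, v ∈ V)
    (hcard : (V.card : ℝ) ≤ A ^ d)
    (hdiam : ∀ i : Fin d, ∀ x ∈ V, ∀ y ∈ V,
      ((x i - y i : ℤ) : ℝ) ≤ (3 / 2 : ℝ) ^ k * (A - 1)) :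
    ∃ E₀ ⊆ E,
      (E₀.card : ℝ) ≤ 2 * A ^ (d - 1) + 36 * d ^ 2 * (1 - (2 / 3 : ℝ) ^ k) * A ^ (d - 1) ∧
      ∀ x ∈ V,
        (({y | y ∈ V ∧ (SimpleGraph.fromEdgeSet
          ((E \ E₀ : Finset (Sym2 (Fin d → ℤ))) : Set (Sym2 (Fin d → ℤ)))).Reachable x y}.ncard : ℝ))
          ≤ ((⌈A ^ d / 2⌉ : ℤ) : ℝ) := by
  exact key_main hd A hA k V E hE hEV hcard hdiam
end

section
/- Let Z_n = Σ_{ω ∈ {0,1}^{E_n}} P_{φ_n(F_n(ω))}(ω) with φ_n(x) = exp(−x/n^a) and F_n : {0,1}^{E_n} → {1,…,n^d}. If (ω(b))_{0 ≤ b ≤ n^d} is a coupling in which ω(b) has law P_{φ_n(b)} for each b, then Z_n = P(∃ b ∈ {1,…,n^d} : F_n(ω(b)) = b). In particular, Z_n equals the probability that the function b ↦ F_n(ω(b)) admits a fixed point. -/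
/-!
Since `F` is increasing and the coupling is decreasing, `b ↦ F (ω(b))` is antitone, so it has at
most one fixed point. Hence the event that it has one is the disjoint union, over configurations
`f`, of the events `{ω(F f) = f}`, whose probabilities are `P_{φ_n(F f)}(f)`; summing over `f`
gives `Z_n`. The coupling is not assumed measurable; measurability up to null sets comes for free
because the laws of the `ω(b)` have total mass one.
-/

open MeasureTheory

/-- The box `Λ(n) = [-n/2, n/2)^d ∩ ℤ^d`. -/
noncomputable def box (d n : ℕ) : Finset (Fin d → ℤ) :=
  Fintype.piFinset fun _ => Finset.Icc (-(n : ℤ) / 2) (((n : ℤ) - 1) / 2)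

/-- The set `E_n` of nearest-neighbour edges with both endpoints in `Λ(n)`. -/
noncomputable def boxEdges (d n : ℕ) : Finset (Sym2 (Fin d → ℤ)) :=
  (((box d n) ×ˢ (box d n)).filter fun p => (∑ i, |p.1 i - p.2 i|) = 1).image (fun p => Sym2.mk p.1 p.2)

/-- Percolation configurations on the edges of the box. -/
abbrev Cfg (d n : ℕ) := {e // e ∈ boxEdges d n} → Bool

/-- `φ_n(x) = exp(-x/n^a)`. -/
noncomputable def phi (n : ℕ) (a : ℝ) (x : ℝ) : ℝ := Real.exp (-x / (n : ℝ) ^ a)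

/-- The Bernoulli(p) weight `P_p(ω)` of a configuration `ω` on `E_n`. -/
noncomputable def Pcfg (d n : ℕ) (p : ℝ) (ω : Cfg d n) : ℝ :=
  ∏ e : {e // e ∈ boxEdges d n}, (if ω e then p else 1 - p)

open Function

theorem Antitone.eq_of_isFixedPt {α : Type*} [LinearOrder α] {g : α → α} (hg : Antitone g)
    {a b : α} (ha : IsFixedPt g a) (hb : IsFixedPt g b) : a = b := by
  rcases le_total a b with hab | hba
  · exact le_antisymm hab (hb ▸ ha ▸ hg hab)
  · exact le_antisymm (ha ▸ hb ▸ hg hba) hba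

namespace MeasureTheory

variable {Ω : Type*} [MeasurableSpace Ω] {μ : Measure Ω}

theorem NullMeasurableSet.of_measure_add_measure_compl_le [IsFiniteMeasure μ] {s : Set Ω}
    (h : μ s + μ sᶜ ≤ μ Set.univ) : NullMeasurableSet s μ := by
  set t := toMeasurable μ s
  set u := toMeasurable μ sᶜ
  have htu : t ∪ u = Set.univ :=
    Set.eq_univ_of_univ_subset fun x _ => (em (x ∈ s)).imp (subset_toMeasurable μ s ·)
      (subset_toMeasurable μ sᶜ ·)
  have hinter : μ (t ∩ u) = 0 := by
    have hsum : μ (t ∪ u) + μ (t ∩ u) = μ (t ∪ u) + 0 := by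
      refine le_antisymm ?_ (by simp)
      rw [measure_union_add_inter t (measurableSet_toMeasurable μ sᶜ), measure_toMeasurable,
        measure_toMeasurable, htu, add_zero]
      exact h
    exact (ENNReal.add_right_inj (measure_ne_top μ _)).mp hsum
  refine ⟨t, measurableSet_toMeasurable μ s, ae_eq_set.mpr ⟨?_, ?_⟩⟩
  · rw [Set.sdiff_eq_empty.mpr (subset_toMeasurable μ s), measure_empty]
  · have hsub : t \ s ⊆ t ∩ u := fun x hx => ⟨hx.1, subset_toMeasurable μ sᶜ hx.2⟩
    exact measure_mono_null hsub hinter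

theorem nullMeasurableSet_preimage_singleton_of_sum_eq [IsFiniteMeasure μ] {α : Type*}
    [Fintype α] {X : Ω → α} (hX : ∑ x, μ (X ⁻¹' {x}) = μ Set.univ) (x : α) : NullMeasurableSet (X ⁻¹' {x}) μ := by
  classical
  refine .of_measure_add_measure_compl_le ?_
  have hcompl : (X ⁻¹' {x})ᶜ = ⋃ y ∈ Finset.univ.erase x, X ⁻¹' {y} := by
    ext o
    simp
  calc μ (X ⁻¹' {x}) + μ (X ⁻¹' {x})ᶜ
      ≤ μ (X ⁻¹' {x}) + ∑ y ∈ Finset.univ.erase x, μ (X ⁻¹' {y}) := by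
        rw [hcompl]
        gcongr
        exact measure_biUnion_finset_le _ _
    _ = μ Set.univ := by
        rw [Finset.add_sum_erase _ (fun y => μ (X ⁻¹' {y})) (Finset.mem_univ x), hX]

theorem measure_exists_isFixedPt_eq_sum {α : Type*} [Fintype α] {W : ℕ → Ω → α} {F : α → ℕ}
    (hanti : ∀ o, Antitone fun b => F (W b o))
    (hnull : ∀ f, NullMeasurableSet (W (F f) ⁻¹' {f}) μ) :
    μ {o | ∃ b, F (W b o) = b} = ∑ f, μ (W (F f) ⁻¹' {f}) := by
  have hevent : {o | ∃ b, F (W b o) = b} = ⋃ f, W (F f) ⁻¹' {f} := by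
    ext o
    simp only [Set.mem_ofPred_eq, Set.mem_iUnion, Set.mem_preimage, Set.mem_singleton_iff]
    constructor
    · rintro ⟨b, hb⟩
      exact ⟨W b o, by rw [hb]⟩
    · rintro ⟨f, hf⟩
      exact ⟨F f, by rw [hf]⟩
  have hdisj : Pairwise (Disjoint on fun f => W (F f) ⁻¹' {f}) := by
    intro f f' hne
    refine Set.disjoint_left.mpr fun o (hf : W (F f) o = f) (hf' : W (F f') o = f') => hne ?_
    have hfix : F f = F f' :=
      (hanti o).eq_of_isFixedPt (congrArg F hf) (congrArg F hf')
    rw [← hf, ← hf', hfix]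
  rw [hevent, measure_iUnion₀ (hdisj.mono fun _ _ h => h.aedisjoint) hnull, tsum_fintype]

end MeasureTheory

section Percolation

variable {d n : ℕ}

theorem Pcfg_nonneg {p : ℝ} (h0 : 0 ≤ p) (h1 : p ≤ 1) (f : Cfg d n) : 0 ≤ Pcfg d n p f :=
  Finset.prod_nonneg fun e _ => by split <;> linarith

theorem sum_Pcfg (p : ℝ) : ∑ f : Cfg d n, Pcfg d n p f = 1 := by
  have hexpand := Finset.prod_univ_sum (fun _ : {e // e ∈ boxEdges d n} => Finset.univ)
    fun _ (b : Bool) => if b then p else 1 - p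
  rw [Fintype.piFinset_univ] at hexpand
  unfold Pcfg
  rw [← hexpand]
  simp

theorem sum_ofReal_Pcfg {p : ℝ} (h0 : 0 ≤ p) (h1 : p ≤ 1) :
    ∑ f : Cfg d n, ENNReal.ofReal (Pcfg d n p f) = 1 := by
  rw [← ENNReal.ofReal_sum_of_nonneg fun f _ => Pcfg_nonneg h0 h1 f, sum_Pcfg, ENNReal.ofReal_one]

end Percolation

theorem phi_nonneg (n : ℕ) (a x : ℝ) : 0 ≤ phi n a x := (Real.exp_pos _).le

theorem phi_le_one (n : ℕ) (a : ℝ) {x : ℝ} (hx : 0 ≤ x) : phi n a x ≤ 1 := by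
  rw [phi, Real.exp_le_one_iff]
  exact div_nonpos_of_nonpos_of_nonneg (by linarith) (by positivity)

theorem Zn_fixed_point_general (d n : ℕ) (a : ℝ)
    (F : Cfg d n → ℕ) (hF : ∀ ω, 1 ≤ F ω ∧ F ω ≤ n ^ d)
    (hFmono : ∀ ω ω' : Cfg d n, (∀ e, ω e = true → ω' e = true) → F ω ≤ F ω')
    {Ω : Type*} [MeasurableSpace Ω] (μ : Measure Ω) [IsProbabilityMeasure μ]
    (W : ℕ → Ω → Cfg d n)
    (hlaw : ∀ b ≤ n ^ d, ∀ f : Cfg d n,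
      μ {o | W b o = f} = ENNReal.ofReal (Pcfg d n (phi n a b) f))
    (hmono : ∀ o : Ω, ∀ b b' : ℕ, b ≤ b' → ∀ e, W b' o e = true → W b o e = true) :
    ENNReal.ofReal (∑ ω : Cfg d n, Pcfg d n (phi n a (F ω)) ω) =
      μ {o | ∃ b : ℕ, 1 ≤ b ∧ b ≤ n ^ d ∧ F (W b o) = b} := by
  have hnull (f : Cfg d n) : NullMeasurableSet (W (F f) ⁻¹' {f}) μ := by
    refine nullMeasurableSet_preimage_singleton_of_sum_eq ?_ f
    simp_rw [measure_univ, Set.preimage, Set.mem_singleton_iff, hlaw (F f) (hF f).2]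
    exact sum_ofReal_Pcfg (phi_nonneg n a _) (phi_le_one n a (F f).cast_nonneg)
  have hevent : {o | ∃ b : ℕ, 1 ≤ b ∧ b ≤ n ^ d ∧ F (W b o) = b} = {o | ∃ b, F (W b o) = b} := by
    ext o
    constructor
    · rintro ⟨b, -, -, hb⟩
      exact ⟨b, hb⟩
    · rintro ⟨b, hb⟩
      exact ⟨b, hb ▸ (hF _).1, hb ▸ (hF _).2, hb⟩
  rw [hevent, measure_exists_isFixedPt_eq_sum
      (fun o _ _ hbb' => hFmono _ _ (hmono o _ _ hbb')) hnull,
    ENNReal.ofReal_sum_of_nonneg fun f _ =>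
      Pcfg_nonneg (phi_nonneg n a _) (phi_le_one n a (F f).cast_nonneg) f]
  exact Finset.sum_congr rfl fun f _ => (hlaw (F f) (hF f).2 f).symm

/-- `Z_n = Σ_ω P_{φ_n(F_n(ω))}(ω)` equals the probability, under a monotone coupling
`(ω(b))_b` with `ω(b) ∼ P_{φ_n(b)}`, that `b ↦ F_n(ω(b))` admits a fixed point
`b ∈ {1, …, n^d}`. -/
theorem Zn_fixed_point (d n : ℕ) (hd : 2 ≤ d) (hn : 1 ≤ n) (a : ℝ) (ha : 0 < a)
    (F : Cfg d n → ℕ) (hF : ∀ ω, 1 ≤ F ω ∧ F ω ≤ n ^ d)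
    (hFmono : ∀ ω ω' : Cfg d n, (∀ e, ω e = true → ω' e = true) → F ω ≤ F ω')
    {Ω : Type*} [MeasurableSpace Ω] (μ : Measure Ω) [IsProbabilityMeasure μ]
    (W : ℕ → Ω → Cfg d n)
    (hlaw : ∀ b ≤ n ^ d, ∀ f : Cfg d n,
      μ {o | W b o = f} = ENNReal.ofReal (Pcfg d n (phi n a b) f))
    (hmono : ∀ o : Ω, ∀ b b' : ℕ, b ≤ b' → ∀ e, W b' o e = true → W b o e = true) :
    ENNReal.ofReal (∑ ω : Cfg d n, Pcfg d n (phi n a (F ω)) ω) =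
      μ {o | ∃ b : ℕ, 1 ≤ b ∧ b ≤ n ^ d ∧ F (W b o) = b} :=
  Zn_fixed_point_general d n a F hF hFmono μ W hlaw hmono
end
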